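/- Fix 0 < δ < 1 and μ > 0 with (d(d+1)/2)·μ < 1 − δ, constants 1 = C₁ < ⋯ < C_d, 1 = D₁ < ⋯ < D_d, R > 0 large enough, and set δ_s := δ + (s(s−1)/2)μ. Let M ⊆ ℤ^d be a module of dimension s ∈ {1,…,d−1}. Then there exists a constant C such that for every a ∈ 𝒵^{(s)}_M, the fast drift plane Π^{(s)}_M(a) := (a + M_ℝ) ∩ 𝒵^{(s)}_M has diameter at most C ‖a‖^{δ_{s+1}}. -/

import Mathlib

open Real MeasureTheory
open scoped BigOperators

noncomputable section

/-- Euclidean norm on `ℝ^d`. -/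
def nrm {d : ℕ} (a : Fin d → ℝ) : ℝ := Real.sqrt (∑ i, a i ^ 2)

/-- Japanese bracket `⟨a⟩ := √(1 + ‖a‖²)` on `ℝ^d`. -/
def jap {d : ℕ} (a : Fin d → ℝ) : ℝ := Real.sqrt (1 + ∑ i, a i ^ 2)

/-- Bracket of a real number: `⟨t⟩ := √(1 + t²)`. -/
def brk (t : ℝ) : ℝ := Real.sqrt (1 + t ^ 2)

/-- Euclidean inner product on `ℝ^d`. -/
def dotR {d : ℕ} (a b : Fin d → ℝ) : ℝ := ∑ i, a i * b i

/-- Coercion of an integer vector to a real vector. -/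
def zr {d : ℕ} (k : Fin d → ℤ) : Fin d → ℝ := fun i => (k i : ℝ)

/-- Partial derivative in the angle variable `φ i` of a function `f φ a`. -/
def pPhi {d : ℕ} (i : Fin d) (f : (Fin d → ℝ) → (Fin d → ℝ) → ℝ) :
    (Fin d → ℝ) → (Fin d → ℝ) → ℝ :=
  fun φ a => fderiv ℝ (fun x => f x a) φ (Pi.single i 1)

/-- Partial derivative in the action variable `a i` of a function `f φ a`. -/
def pAct {d : ℕ} (i : Fin d) (f : (Fin d → ℝ) → (Fin d → ℝ) → ℝ) :
    (Fin d → ℝ) → (Fin d → ℝ) → ℝ :=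
  fun φ a => fderiv ℝ (fun y => f φ y) a (Pi.single i 1)

/-- Iterated partial derivatives in the angles, indexed by a list of directions. -/
def pPhiL {d : ℕ} (L : List (Fin d)) (f : (Fin d → ℝ) → (Fin d → ℝ) → ℝ) :
    (Fin d → ℝ) → (Fin d → ℝ) → ℝ := L.foldr pPhi f

/-- Iterated partial derivatives in the actions, indexed by a list of directions. -/
def pActL {d : ℕ} (L : List (Fin d)) (f : (Fin d → ℝ) → (Fin d → ℝ) → ℝ) :
    (Fin d → ℝ) → (Fin d → ℝ) → ℝ := L.foldr pAct f

/-- Partial derivative in direction `i` of a function of the actions only (real valued). -/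
def pA {d : ℕ} (i : Fin d) (g : (Fin d → ℝ) → ℝ) : (Fin d → ℝ) → ℝ :=
  fun a => fderiv ℝ g a (Pi.single i 1)

/-- Iterated partial derivatives of a function of the actions only (real valued). -/
def pAL {d : ℕ} (L : List (Fin d)) (g : (Fin d → ℝ) → ℝ) : (Fin d → ℝ) → ℝ := L.foldr pA g

/-- Partial derivative in direction `i` of a complex valued function of the actions. -/
def pAC {d : ℕ} (i : Fin d) (g : (Fin d → ℝ) → ℂ) : (Fin d → ℝ) → ℂ :=
  fun a => fderiv ℝ g a (Pi.single i 1)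

/-- Iterated partial derivatives of a complex valued function of the actions. -/
def pALC {d : ℕ} (L : List (Fin d)) (g : (Fin d → ℝ) → ℂ) : (Fin d → ℝ) → ℂ := L.foldr pAC g

/-- `2π`-periodicity in the angle variables: `f` is a function on `𝕋^d × ℝ^d`. -/
def Periodic2 {d : ℕ} (f : (Fin d → ℝ) → (Fin d → ℝ) → ℝ) : Prop :=
  ∀ (φ a : Fin d → ℝ) (k : Fin d → ℤ), f (fun i => φ i + 2 * Real.pi * (k i : ℝ)) a = f φ a

/-- The symbol estimates: for all multi-indices (given as lists of directions)
`|∂^α_φ ∂^β_a f| ≤ C ⟨a⟩^(m - δ|β|)`. -/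
def SymbolBound {d : ℕ} (m δ : ℝ) (f : (Fin d → ℝ) → (Fin d → ℝ) → ℝ) : Prop :=
  ∀ Lφ La : List (Fin d), ∃ C, 0 < C ∧ ∀ φ a,
    |pActL La (pPhiL Lφ f) φ a| ≤ C * jap a ^ (m - δ * (La.length : ℝ))

/-- The symbol class `S^m_δ` on `𝕋^d × ℝ^d`. -/
def IsSymbol {d : ℕ} (m δ : ℝ) (f : (Fin d → ℝ) → (Fin d → ℝ) → ℝ) : Prop :=
  ContDiff ℝ (⊤ : ℕ∞) (fun p : (Fin d → ℝ) × (Fin d → ℝ) => f p.1 p.2) ∧ Periodic2 f ∧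
    SymbolBound m δ f

/-- The remainder class `𝓡^N`: derivatives up to total order 2 decay like `⟨a⟩^(-N)`. -/
def IsRemainder {d : ℕ} (N : ℝ) (f : (Fin d → ℝ) → (Fin d → ℝ) → ℝ) : Prop :=
  ContDiff ℝ (⊤ : ℕ∞) (fun p : (Fin d → ℝ) × (Fin d → ℝ) => f p.1 p.2) ∧ Periodic2 f ∧
    ∀ Lφ La : List (Fin d), Lφ.length + La.length ≤ 2 → ∃ C, 0 < C ∧ ∀ φ a,
      |pActL La (pPhiL Lφ f) φ a| ≤ C * jap a ^ (-N)

/-- Joint smoothness of a time dependent function on `ℝ × 𝕋^d × ℝ^d`. -/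
def TSmooth {d : ℕ} (P : ℝ → (Fin d → ℝ) → (Fin d → ℝ) → ℝ) : Prop :=
  ContDiff ℝ (⊤ : ℕ∞) (fun p : ℝ × (Fin d → ℝ) × (Fin d → ℝ) => P p.1 p.2.1 p.2.2)

/-- `P ∈ C^∞_b(ℝ; S^m_δ)`: smooth in all variables, periodic in the angles, and all the
symbol seminorms of all time derivatives are bounded uniformly in `t`. -/
def CinftyBSymbol {d : ℕ} (m δ : ℝ) (P : ℝ → (Fin d → ℝ) → (Fin d → ℝ) → ℝ) : Prop :=
  TSmooth P ∧ (∀ t, Periodic2 (P t)) ∧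
    ∀ (j : ℕ) (Lφ La : List (Fin d)), ∃ C, 0 < C ∧ ∀ (t : ℝ) (φ a : Fin d → ℝ),
      |pActL La (pPhiL Lφ (fun x y => iteratedDeriv j (fun s => P s x y) t)) φ a| ≤
        C * jap a ^ (m - δ * (La.length : ℝ))

/-- `P ∈ C^∞_b(ℝ; 𝓡^N)`. -/
def CinftyBRemainder {d : ℕ} (N : ℝ) (P : ℝ → (Fin d → ℝ) → (Fin d → ℝ) → ℝ) : Prop :=
  TSmooth P ∧ (∀ t, Periodic2 (P t)) ∧
    ∀ (j : ℕ) (Lφ La : List (Fin d)), Lφ.length + La.length ≤ 2 →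
      ∃ C, 0 < C ∧ ∀ (t : ℝ) (φ a : Fin d → ℝ),
        |pActL La (pPhiL Lφ (fun x y => iteratedDeriv j (fun s => P s x y) t)) φ a| ≤
          C * jap a ^ (-N)

/-- `P ∈ C^∞(ℝ; S^m_δ)`: smooth in all variables, periodic in the angles, and all the
symbol seminorms of all time derivatives are bounded uniformly on compact time intervals. -/
def CtSymbol {d : ℕ} (m δ : ℝ) (P : ℝ → (Fin d → ℝ) → (Fin d → ℝ) → ℝ) : Prop :=
  TSmooth P ∧ (∀ t, Periodic2 (P t)) ∧
    ∀ (j : ℕ) (Lφ La : List (Fin d)) (T : ℝ), 0 < T → ∃ C, 0 < C ∧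
      ∀ (t : ℝ), |t| ≤ T → ∀ (φ a : Fin d → ℝ),
        |pActL La (pPhiL Lφ (fun x y => iteratedDeriv j (fun s => P s x y) t)) φ a| ≤
          C * jap a ^ (m - δ * (La.length : ℝ))

/-- `P ∈ C^∞(ℝ; 𝓡^N)`. -/
def CtRemainder {d : ℕ} (N : ℝ) (P : ℝ → (Fin d → ℝ) → (Fin d → ℝ) → ℝ) : Prop :=
  TSmooth P ∧ (∀ t, Periodic2 (P t)) ∧
    ∀ (j : ℕ) (Lφ La : List (Fin d)), Lφ.length + La.length ≤ 2 →
      ∀ (T : ℝ), 0 < T → ∃ C, 0 < C ∧ ∀ (t : ℝ), |t| ≤ T → ∀ (φ a : Fin d → ℝ),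
        |pActL La (pPhiL Lφ (fun x y => iteratedDeriv j (fun s => P s x y) t)) φ a| ≤
          C * jap a ^ (-N)

/-- Fourier coefficient `f̂_k(a) = (2π)^{-d} ∫_{𝕋^d} f(φ,a) e^{-ik·φ} dφ`. -/
def fCoeff {d : ℕ} (f : (Fin d → ℝ) → (Fin d → ℝ) → ℝ) (k : Fin d → ℤ) (a : Fin d → ℝ) : ℂ :=
  ((1 / (2 * Real.pi) ^ d : ℝ) : ℂ) *
    ∫ φ in Set.univ.pi fun _ : Fin d => Set.Ioc (0 : ℝ) (2 * Real.pi),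
      Complex.exp (-Complex.I * (∑ i, (k i : ℂ) * (φ i : ℂ))) * (f φ a : ℂ)

/-- `a` is resonant with `k`: `|a·k| ≤ ‖a‖^δ ‖k‖` and `‖k‖ ≤ ‖a‖^μ`. -/
def Resonant {d : ℕ} (δ μ : ℝ) (a : Fin d → ℝ) (k : Fin d → ℤ) : Prop :=
  |dotR a (zr k)| ≤ nrm a ^ δ * nrm (zr k) ∧ nrm (zr k) ≤ nrm a ^ μ

/-- A function is in normal form: for every `k ≠ 0`, every point in the support of the
`k`-th Fourier coefficient is resonant with `k`. -/
def InNormalForm {d : ℕ} (δ μ : ℝ) (f : (Fin d → ℝ) → (Fin d → ℝ) → ℝ) : Prop :=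
  ∀ k : Fin d → ℤ, k ≠ 0 → ∀ a : Fin d → ℝ, fCoeff f k a ≠ 0 → Resonant δ μ a k

/-- Poisson bracket `{f;g} = Σ_j (∂f/∂φ_j ∂g/∂a_j − ∂g/∂φ_j ∂f/∂a_j)`. -/
def pois {d : ℕ} (f g : (Fin d → ℝ) → (Fin d → ℝ) → ℝ) : (Fin d → ℝ) → (Fin d → ℝ) → ℝ :=
  fun φ a => ∑ j, (pPhi j f φ a * pAct j g φ a - pPhi j g φ a * pAct j f φ a)

/-- Iterated Poisson brackets: `f_0 = f`, `f_{l+1} = {f_l; g}`. -/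
def poisIter {d : ℕ} (f g : (Fin d → ℝ) → (Fin d → ℝ) → ℝ) :
    ℕ → (Fin d → ℝ) → (Fin d → ℝ) → ℝ
  | 0 => f
  | l + 1 => pois (poisIter f g l) g

/-- The unperturbed Hamiltonian `h₀(a) = Σ_j a_j²/2`. -/
def h0 {d : ℕ} (a : Fin d → ℝ) : ℝ := (∑ j, a j ^ 2) / 2

/-- The Hamiltonian vector field of `g`, at the point `z = (φ, a)`:
`(∂g/∂a, −∂g/∂φ)`. -/
def hamVF {d : ℕ} (g : (Fin d → ℝ) → (Fin d → ℝ) → ℝ)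
    (z : (Fin d → ℝ) × (Fin d → ℝ)) : (Fin d → ℝ) × (Fin d → ℝ) :=
  (fun i => pAct i g z.1 z.2, fun i => -(pPhi i g z.1 z.2))

/-- `(φ, a)` is a (global) solution of the Hamilton equations
`φ̇ = ∂H/∂a`, `ȧ = −∂H/∂φ` of the time dependent Hamiltonian `H t φ a`. -/
def IsHamSol {d : ℕ} (H : ℝ → (Fin d → ℝ) → (Fin d → ℝ) → ℝ) (φ a : ℝ → Fin d → ℝ) : Prop :=
  ∀ (t : ℝ) (i : Fin d),
    HasDerivAt (fun s => φ s i) (pAct i (H t) (φ t) (a t)) t ∧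
    HasDerivAt (fun s => a s i) (-(pPhi i (H t) (φ t) (a t))) t

/-- The standard symplectic form on `ℝ^d × ℝ^d`, with points written as `(φ, a)`. -/
def symp {d : ℕ} (u v : (Fin d → ℝ) × (Fin d → ℝ)) : ℝ := dotR u.2 v.1 - dotR v.2 u.1

/-- A map of the phase space is canonical: its differential preserves the symplectic form. -/
def IsCanonical {d : ℕ}
    (T : (Fin d → ℝ) × (Fin d → ℝ) → (Fin d → ℝ) × (Fin d → ℝ)) : Prop :=
  ∀ z u v, symp (fderiv ℝ T z u) (fderiv ℝ T z v) = symp u v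

/-- A smooth time dependent family of canonical transformations. -/
def IsCanonicalFamily {d : ℕ}
    (T : ℝ → (Fin d → ℝ) × (Fin d → ℝ) → (Fin d → ℝ) × (Fin d → ℝ)) : Prop :=
  ContDiff ℝ (⊤ : ℕ∞) (fun p : ℝ × ((Fin d → ℝ) × (Fin d → ℝ)) => T p.1 p.2) ∧
    (∀ t, Function.Bijective (T t)) ∧ ∀ t, IsCanonical (T t)

/-- The time dependent transformation `T` conjugates the Hamilton equations of `H` to those of
`H'`: in the new coordinates solutions of `H'` are mapped to solutions of `H`. -/
def Conjugates {d : ℕ} (T : ℝ → (Fin d → ℝ) × (Fin d → ℝ) → (Fin d → ℝ) × (Fin d → ℝ))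
    (H H' : ℝ → (Fin d → ℝ) → (Fin d → ℝ) → ℝ) : Prop :=
  ∀ φ' a' : ℝ → Fin d → ℝ, IsHamSol H' φ' a' →
    IsHamSol H (fun t => (T t (φ' t, a' t)).1) (fun t => (T t (φ' t, a' t)).2)

/-! Geometric constructions -/

/-- `δ_s := δ + (s(s−1)/2) μ`. -/
def deltaS (δ μ : ℝ) (s : ℕ) : ℝ := δ + ((s : ℝ) * ((s : ℝ) - 1) / 2) * μ

/-- The real span `M_ℝ` of a subgroup `M ⊆ ℤ^d`. -/
def MrealSet {d : ℕ} (M : Submodule ℤ (Fin d → ℤ)) : Submodule ℝ (Fin d → ℝ) :=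
  Submodule.span ℝ (zr '' (M : Set (Fin d → ℤ)))

/-- `M` is a module: a subgroup of `ℤ^d` with `ℤ^d ∩ span_ℝ M = M`. -/
def IsZMod {d : ℕ} (M : Submodule ℤ (Fin d → ℤ)) : Prop :=
  ∀ k : Fin d → ℤ, zr k ∈ MrealSet M → k ∈ M

/-- The dimension of a module `M ⊆ ℤ^d`. -/
def dimM {d : ℕ} (M : Submodule ℤ (Fin d → ℤ)) : ℕ := Module.finrank ℝ (MrealSet M)

/-- Resonant zones `𝒵^{(s)}_M`.  For `s = 0` (and `M = {0}`) it is the nonresonant zone. -/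
def zone (δ μ : ℝ) (C D : ℕ → ℝ) (R : ℝ) {d : ℕ} (s : ℕ)
    (M : Submodule ℤ (Fin d → ℤ)) : Set (Fin d → ℝ) :=
  if s = 0 then
    {a | nrm a < R ∨ ∀ k : Fin d → ℤ, k ≠ 0 → nrm (zr k) ≤ nrm a ^ μ →
      nrm (zr k) * nrm a ^ δ ≤ |dotR a (zr k)|}
  else
    {a | R ≤ nrm a ∧ ∃ k : Fin s → Fin d → ℤ, (∀ j, k j ∈ M) ∧
      (LinearIndependent ℝ fun j => zr (k j)) ∧
      ∀ j : Fin s,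
        |dotR a (zr (k j))| ≤ C ((j : ℕ) + 1) * nrm (zr (k j)) * nrm a ^ deltaS δ μ ((j : ℕ) + 1) ∧
        nrm (zr (k j)) ≤ D ((j : ℕ) + 1) * nrm a ^ μ}

/-- Auxiliary downward recursion for the resonant blocks: `blockAux n M` is the block of the
module `M`, thought of as having dimension `d − n`. -/
def blockAux (δ μ : ℝ) (C D : ℕ → ℝ) (R : ℝ) (d : ℕ) :
    ℕ → Submodule ℤ (Fin d → ℤ) → Set (Fin d → ℝ)
  | 0, M => zone δ μ C D R d M
  | n + 1, M =>
      zone δ μ C D R (d - (n + 1)) M \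
        ⋃ (m : Fin (n + 1)) (M' : Submodule ℤ (Fin d → ℤ))
          (_ : IsZMod M' ∧ dimM M' = d - (m : ℕ)), blockAux δ μ C D R d m M'
  termination_by n => n
  decreasing_by exact m.isLt

/-- The resonant block `𝓑^{(s)}_M`. -/
def block (δ μ : ℝ) (C D : ℕ → ℝ) (R : ℝ) {d : ℕ} (s : ℕ)
    (M : Submodule ℤ (Fin d → ℤ)) : Set (Fin d → ℝ) :=
  blockAux δ μ C D R d (d - s) M

/-- The extended block `E^{(s)}_M`, defined by recursion on the dimension `s`. -/
def extBlock (δ μ : ℝ) (C D : ℕ → ℝ) (R : ℝ) (d : ℕ) :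
    ℕ → Submodule ℤ (Fin d → ℤ) → Set (Fin d → ℝ)
  | 0, M =>
      {x | ∃ p ∈ block δ μ C D R 0 M, ∃ q ∈ MrealSet M, x = p + q} ∩ zone δ μ C D R 0 M
  | s + 1, M =>
      ({x | ∃ p ∈ block δ μ C D R (s + 1) M, ∃ q ∈ MrealSet M, x = p + q} ∩
          zone δ μ C D R (s + 1) M) \
        ⋃ (s' : Fin (s + 1)) (M' : Submodule ℤ (Fin d → ℤ))
          (_ : IsZMod M' ∧ dimM M' = (s' : ℕ)), extBlock δ μ C D R d s' M'
  termination_by s => s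
  decreasing_by exact s'.isLt

/-- The fast drift plane `Π^{(s)}_M(p) = (p + M_ℝ) ∩ 𝒵^{(s)}_M`. -/
def plane (δ μ : ℝ) (C D : ℕ → ℝ) (R : ℝ) {d : ℕ} (s : ℕ)
    (M : Submodule ℤ (Fin d → ℤ)) (p : Fin d → ℝ) : Set (Fin d → ℝ) :=
  {x | ∃ q ∈ MrealSet M, x = p + q} ∩ zone δ μ C D R s M

/-- The extended fast drift plane `[Π^{(s)}_M(p)]^{ext}`. -/
def planeExt (δ μ : ℝ) (C D : ℕ → ℝ) (R : ℝ) {d : ℕ} (s : ℕ)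
    (M : Submodule ℤ (Fin d → ℤ)) (p : Fin d → ℝ) : Set (Fin d → ℝ) :=
  ⋃ a' ∈ plane δ μ C D R s M p, {x | nrm (x - a') < nrm a' ^ deltaS δ μ (s + 1)}


def toE {d : ℕ} : (Fin d → ℝ) ≃ₗ[ℝ] EuclideanSpace ℝ (Fin d) :=
  (WithLp.linearEquiv 2 ℝ (Fin d → ℝ)).symm
lemma nrm_toE {d : ℕ} (a : Fin d → ℝ) : ‖toE a‖ = nrm a := by
  rw [EuclideanSpace.norm_eq, nrm]
  congr 1
  refine Finset.sum_congr rfl fun i _ => ?_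
  rw [Real.norm_eq_abs, sq_abs]; rfl
lemma nrm_nonneg {d : ℕ} (a : Fin d → ℝ) : 0 ≤ nrm a := Real.sqrt_nonneg _
lemma inner_toE {d : ℕ} (a b : Fin d → ℝ) :
    (inner ℝ (toE a) (toE b) : ℝ) = dotR a b := by
  rw [PiLp.inner_apply, dotR]
  exact Finset.sum_congr rfl fun i _ => mul_comm _ _
lemma abs_dotR_le {d : ℕ} (a b : Fin d → ℝ) : |dotR a b| ≤ nrm a * nrm b := by
  rw [← inner_toE, ← nrm_toE, ← nrm_toE]
  exact abs_real_inner_le_norm _ _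
lemma dotR_comm {d : ℕ} (a b : Fin d → ℝ) : dotR a b = dotR b a := by
  simp [dotR, mul_comm]
def VM {d : ℕ} (M : Submodule ℤ (Fin d → ℤ)) : Submodule ℝ (EuclideanSpace ℝ (Fin d)) :=
  (MrealSet M).map ((toE : (Fin d → ℝ) ≃ₗ[ℝ] _) : (Fin d → ℝ) →ₗ[ℝ] EuclideanSpace ℝ (Fin d))
lemma mem_VM {d : ℕ} (M : Submodule ℤ (Fin d → ℤ)) (a : Fin d → ℝ) :
    toE a ∈ VM M ↔ a ∈ MrealSet M := by
  constructor
  · rintro ⟨b, hb, h⟩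
    rwa [← toE.injective h]
  · exact fun h => ⟨a, h, rfl⟩
lemma span_eq_MrealSet {d s : ℕ} (M : Submodule ℤ (Fin d → ℤ)) (hdim : dimM M = s)
    (k : Fin s → Fin d → ℤ) (hkM : ∀ j, k j ∈ M)
    (hkLI : LinearIndependent ℝ fun j => zr (k j)) :
    Submodule.span ℝ (Set.range fun j => zr (k j)) = MrealSet M := by
  have hle : Submodule.span ℝ (Set.range fun j => zr (k j)) ≤ MrealSet M := by
    rw [Submodule.span_le]
    rintro - ⟨j, rfl⟩
    exact Submodule.subset_span ⟨k j, hkM j, rfl⟩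
  refine Submodule.eq_of_le_of_finrank_le hle ?_
  rw [show Module.finrank ℝ (MrealSet M) = s from hdim, finrank_span_eq_card hkLI]
  simp
lemma VM_eq_span {d s : ℕ} (M : Submodule ℤ (Fin d → ℤ)) (hdim : dimM M = s)
    (k : Fin s → Fin d → ℤ) (hkM : ∀ j, k j ∈ M)
    (hkLI : LinearIndependent ℝ fun j => zr (k j)) :
    VM M = Submodule.span ℝ (Set.range fun j => toE (zr (k j))) := by
  rw [VM, ← span_eq_MrealSet M hdim k hkM hkLI, Submodule.map_span]
  congr 1
  rw [← Set.range_comp]; rfl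

theorem det_abs_le_prod_colsum {n : ℕ} (A : Matrix (Fin n) (Fin n) ℝ) :
    |A.det| ≤ ∏ i, ∑ r, |A r i| := by
  rw [Matrix.det_apply]
  calc |∑ σ : Equiv.Perm (Fin n), Equiv.Perm.sign σ • ∏ i, A (σ i) i|
      ≤ ∑ σ : Equiv.Perm (Fin n), |Equiv.Perm.sign σ • ∏ i, A (σ i) i| :=
        Finset.abs_sum_le_sum_abs _ _
    _ = ∑ σ : Equiv.Perm (Fin n), ∏ i, |A (σ i) i| := by
        refine Finset.sum_congr rfl fun σ _ => ?_
        rcases Int.units_eq_one_or (Equiv.Perm.sign σ) with h | h <;>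
          simp [h, Finset.abs_prod]
    _ = ∑ f ∈ Finset.univ.image (fun σ : Equiv.Perm (Fin n) => (σ : Fin n → Fin n)),
          ∏ i, |A (f i) i| := by
        rw [Finset.sum_image]
        intro σ _ τ _ h
        exact Equiv.coe_fn_injective h
    _ ≤ ∑ f : Fin n → Fin n, ∏ i, |A (f i) i| :=
        Finset.sum_le_sum_of_subset_of_nonneg (Finset.subset_univ _)
          (fun f _ _ => Finset.prod_nonneg fun i _ => abs_nonneg _)
    _ = ∏ i, ∑ r, |A r i| := by
        rw [Finset.prod_univ_sum, Fintype.piFinset_univ]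

lemma gram_det_ge_one {d s : ℕ} (k : Fin s → Fin d → ℤ)
    (hkLI : LinearIndependent ℝ fun j => zr (k j)) :
    1 ≤ |(Matrix.det (Matrix.of fun i j => dotR (zr (k i)) (zr (k j))))| := by
  set G : Matrix (Fin s) (Fin s) ℝ := Matrix.of fun i j => dotR (zr (k i)) (zr (k j)) with hG
  set Gz : Matrix (Fin s) (Fin s) ℤ := Matrix.of fun i j => ∑ t, k i t * k j t with hGz
  have hmap : G = Gz.map (Int.cast : ℤ → ℝ) := by
    ext i j
    simp [hG, hGz, dotR, zr]
  have hdet : G.det = ((Gz.det : ℤ) : ℝ) := by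
    rw [hmap]
    exact (RingHom.map_det (Int.castRingHom ℝ) Gz).symm
  have hne : G.det ≠ 0 := by
    intro h0
    obtain ⟨v, hv0, hGv⟩ := (Matrix.exists_mulVec_eq_zero_iff).mpr h0
    have hLI' : LinearIndependent ℝ fun j => toE (zr (k j)) :=
      hkLI.map' toE.toLinearMap toE.ker
    have hinner : (inner ℝ (∑ i, v i • toE (zr (k i))) (∑ i, v i • toE (zr (k i))) : ℝ) = 0 := by
      rw [sum_inner]
      have step : ∀ i, (inner ℝ (v i • toE (zr (k i))) (∑ j, v j • toE (zr (k j))) : ℝ)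
          = v i * (G.mulVec v) i := by
        intro i
        rw [real_inner_smul_left, inner_sum]
        congr 1
        rw [Matrix.mulVec, dotProduct]
        refine Finset.sum_congr rfl fun j _ => ?_
        rw [real_inner_smul_right, inner_toE]
        simp [hG]
        ring
      rw [Finset.sum_congr rfl fun i _ => step i, hGv]
      simp
    have hm : ∑ i, v i • toE (zr (k i)) = 0 := inner_self_eq_zero.mp hinner
    exact hv0 (funext fun i => Fintype.linearIndependent_iff.mp hLI' v hm i)
  have hz : Gz.det ≠ 0 := fun h => hne (by rw [hdet, h]; simp)
  rw [hdet, ← Int.cast_abs]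
  have : (1 : ℤ) ≤ |Gz.det| := Int.one_le_abs hz
  exact_mod_cast this

lemma deltaS_succ (δ μ : ℝ) (s : ℕ) : deltaS δ μ (s + 1) = deltaS δ μ s + s * μ := by
  unfold deltaS
  push_cast
  ring

lemma deltaS_mono (δ : ℝ) {μ : ℝ} (hμ : 0 ≤ μ) {a b : ℕ} (hab : a ≤ b) :
    deltaS δ μ a ≤ deltaS δ μ b := by
  unfold deltaS
  have ha : (a : ℝ) ≤ b := by exact_mod_cast hab
  have ha0 : (0 : ℝ) ≤ a := Nat.cast_nonneg a
  rcases Nat.eq_zero_or_pos b with hb | hb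
  · subst hb
    have : a = 0 := Nat.le_zero.mp hab
    subst this
    simp
  · have hb1 : (1 : ℝ) ≤ b := by exact_mod_cast hb
    nlinarith [mul_nonneg (sub_nonneg.mpr ha) (by linarith : (0:ℝ) ≤ (a:ℝ) + b - 1)]

theorem zone_proj_bound {d s : ℕ} (δ μ : ℝ) (C D : ℕ → ℝ) (R : ℝ)
    (hμ : 0 < μ)
    (hCs : ∀ j : Fin s, C ((j : ℕ) + 1) ≤ C s) (hDs : ∀ j : Fin s, D ((j : ℕ) + 1) ≤ D s)
    (hC0 : ∀ j : Fin s, 0 ≤ C ((j : ℕ) + 1))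
    (hs1 : 1 ≤ s)
    (M : Submodule ℤ (Fin d → ℤ)) (hdim : dimM M = s)
    (x : Fin d → ℝ) (hx : x ∈ zone δ μ C D R s M) (hx1 : 1 ≤ nrm x) :
    ‖(Submodule.orthogonalProjectionOnto (VM M) (toE x) : EuclideanSpace ℝ (Fin d))‖ ≤
      ((s : ℝ) ^ (s + 1) * (C s * D s ^ s)) * nrm x ^ deltaS δ μ (s + 1) := by
  rw [zone, if_neg (by omega)] at hx
  obtain ⟨hR, k, hkM, hkLI, hkB⟩ := hx
  have hX0 : (0 : ℝ) < nrm x := lt_of_lt_of_le one_pos hx1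
  set X := nrm x with hXdef
  set z := (Submodule.orthogonalProjectionOnto (VM M) (toE x) : EuclideanSpace ℝ (Fin d)) with hz
  have hzV : z ∈ VM M := SetLike.coe_mem _
  rw [VM_eq_span M hdim k hkM hkLI] at hzV
  obtain ⟨c, hc⟩ := (Submodule.mem_span_range_iff_exists_fun ℝ).mp hzV
  -- the inner products of z with the k j
  set w : Fin s → ℝ := fun j => dotR x (zr (k j)) with hw
  have hkV : ∀ j, toE (zr (k j)) ∈ VM M := fun j =>
    (mem_VM M _).mpr (Submodule.subset_span ⟨k j, hkM j, rfl⟩)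
  have hzw : ∀ j, (inner ℝ z (toE (zr (k j))) : ℝ) = w j := by
    intro j
    have horth := Submodule.starProjection_inner_eq_zero (K := VM M) (toE x) (toE (zr (k j))) (hkV j)
    rw [Submodule.starProjection_apply, inner_sub_left, sub_eq_zero] at horth
    rw [← horth, inner_toE]
  -- bounds
  set N := D s * X ^ μ with hN
  set W := C s * N * X ^ deltaS δ μ s with hWdef
  have hkN : ∀ j, nrm (zr (k j)) ≤ N := by
    intro j
    refine le_trans (hkB j).2 ?_
    exact mul_le_mul_of_nonneg_right (hDs j) (Real.rpow_nonneg hX0.le μ)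
  have hN0 : 0 ≤ N := le_trans (nrm_nonneg (zr (k ⟨0, by omega⟩))) (hkN _)
  have hCs0 : 0 ≤ C s := le_trans (hC0 ⟨s - 1, by omega⟩) (by
    have := hCs ⟨s - 1, by omega⟩
    simpa [Nat.succ_pred_eq_of_pos hs1] using this)
  have hW0 : 0 ≤ W := by
    apply mul_nonneg (mul_nonneg hCs0 hN0) (Real.rpow_nonneg hX0.le _)
  have hwW : ∀ j, |w j| ≤ W := by
    intro j
    refine le_trans (hkB j).1 ?_
    rw [hWdef]
    have h1 : C ((j : ℕ) + 1) * nrm (zr (k j)) ≤ C s * N :=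
      mul_le_mul (hCs j) (hkN j) (nrm_nonneg _) hCs0
    have h2 : X ^ deltaS δ μ ((j : ℕ) + 1) ≤ X ^ deltaS δ μ s :=
      Real.rpow_le_rpow_of_exponent_le hx1 (deltaS_mono δ hμ.le (by omega))
    exact mul_le_mul h1 h2 (Real.rpow_nonneg hX0.le _) (mul_nonneg hCs0 hN0)
  -- the Gram matrix
  set G : Matrix (Fin s) (Fin s) ℝ := Matrix.of fun i j => dotR (zr (k i)) (zr (k j)) with hG
  have hdet : 1 ≤ |G.det| := gram_det_ge_one k hkLI
  have hGB : ∀ i j, |G i j| ≤ N * N := by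
    intro i j
    refine le_trans (abs_dotR_le _ _) ?_
    exact mul_le_mul (hkN i) (hkN j) (nrm_nonneg _) hN0
  -- G *ᵥ c = w
  have hGc : G.mulVec c = w := by
    funext j
    rw [Matrix.mulVec, dotProduct]
    have : w j = inner ℝ z (toE (zr (k j))) := (hzw j).symm
    rw [this, ← hc, sum_inner]
    refine Finset.sum_congr rfl fun i _ => ?_
    rw [real_inner_smul_left, inner_toE]
    simp only [hG, Matrix.of_apply]
    rw [dotR_comm (zr (k j))]
    ring
  -- Cramer bound on c
  have hcB : ∀ i, |c i| ≤ s * W * (s * (N * N)) ^ (s - 1) := by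
    intro i
    have hcr : G.det • c = G.adjugate.mulVec w := by
      rw [← hGc, Matrix.mulVec_mulVec, Matrix.adjugate_mul, Matrix.smul_mulVec,
        Matrix.one_mulVec]
    have hci : G.det * c i = Matrix.cramer G w i := by
      have := congrFun hcr i
      rw [Matrix.cramer_eq_adjugate_mulVec]
      simpa using this
    have hup : |Matrix.cramer G w i| ≤ s * W * (s * (N * N)) ^ (s - 1) := by
      rw [Matrix.cramer_apply]
      refine le_trans (det_abs_le_prod_colsum _) ?_
      have hcol : ∀ j : Fin s, (∑ r, |(Matrix.updateCol G i w) r j|) ≤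
          if j = i then s * W else s * (N * N) := by
        intro j
        by_cases hji : j = i
        · subst hji
          simp only [if_pos rfl]
          calc ∑ r, |(Matrix.updateCol G j w) r j| = ∑ r : Fin s, |w r| := by
                refine Finset.sum_congr rfl fun r _ => ?_
                rw [Matrix.updateCol_apply, if_pos rfl]
            _ ≤ ∑ _r : Fin s, W := Finset.sum_le_sum fun r _ => hwW r
            _ = s * W := by simp [mul_comm]
        · simp only [if_neg hji]
          calc ∑ r, |(Matrix.updateCol G i w) r j| = ∑ r : Fin s, |G r j| := by
                refine Finset.sum_congr rfl fun r _ => ?_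
                rw [Matrix.updateCol_apply, if_neg hji]
            _ ≤ ∑ _r : Fin s, N * N := Finset.sum_le_sum fun r _ => hGB r j
            _ = s * (N * N) := by simp [mul_comm]
      calc ∏ j, ∑ r, |(Matrix.updateCol G i w) r j|
          ≤ ∏ j : Fin s, (if j = i then s * W else s * (N * N)) := by
            refine Finset.prod_le_prod (fun j _ => Finset.sum_nonneg fun r _ => abs_nonneg _)
              (fun j _ => hcol j)
        _ = s * W * (s * (N * N)) ^ (s - 1) := by
            rw [← Finset.prod_erase_mul _ _ (Finset.mem_univ i), if_pos rfl]
            rw [Finset.prod_congr rfl (fun j hj => if_neg (Finset.ne_of_mem_erase hj)),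
              Finset.prod_const, Finset.card_erase_of_mem (Finset.mem_univ i),
              Finset.card_univ, Fintype.card_fin]
            ring
    calc |c i| = 1 * |c i| := (one_mul _).symm
      _ ≤ |G.det| * |c i| := mul_le_mul_of_nonneg_right hdet (abs_nonneg _)
      _ = |G.det * c i| := (abs_mul _ _).symm
      _ = |Matrix.cramer G w i| := by rw [hci]
      _ ≤ _ := hup
  -- the squared norm
  have hz2 : ‖z‖ ^ 2 ≤ (s : ℝ) ^ (s + 1) * (W * N ^ (s - 1)) ^ 2 := by
    have h1 : ‖z‖ ^ 2 = ∑ i, c i * w i := by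
      rw [← real_inner_self_eq_norm_sq]
      nth_rewrite 1 [← hc]
      rw [sum_inner]
      refine Finset.sum_congr rfl fun i _ => ?_
      rw [real_inner_smul_left]
      congr 1
      rw [real_inner_comm]
      exact hzw i
    calc ‖z‖ ^ 2 = ∑ i, c i * w i := h1
      _ ≤ ∑ i, |c i * w i| := Finset.sum_le_sum fun i _ => le_abs_self _
      _ ≤ ∑ _i : Fin s, (s * W * (s * (N * N)) ^ (s - 1)) * W := by
          refine Finset.sum_le_sum fun i _ => ?_
          rw [abs_mul]
          exact mul_le_mul (hcB i) (hwW i) (abs_nonneg _)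
            (by positivity)
      _ = s * ((s * W * (s * (N * N)) ^ (s - 1)) * W) := by simp [mul_comm]
      _ = (s : ℝ) ^ (s + 1) * (W * N ^ (s - 1)) ^ 2 := by
          have hpow : ((s : ℝ)) ^ (s + 1) = (s : ℝ) ^ 2 * (s : ℝ) ^ (s - 1) := by
            rw [← pow_add]
            congr 1
            omega
          rw [hpow, mul_pow, mul_pow]
          ring
  -- identify the bound
  have hNs : N ^ s = D s ^ s * X ^ ((s : ℝ) * μ) := by
    rw [hN, mul_pow]
    congr 1
    rw [← Real.rpow_natCast (X ^ μ) s, ← Real.rpow_mul hX0.le]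
    congr 1
    ring
  have hNr : N * N ^ (s - 1) = N ^ s := by
    rw [← pow_succ']
    congr 1
    omega
  have hWN : W * N ^ (s - 1) = (C s * D s ^ s) * X ^ deltaS δ μ (s + 1) := by
    calc W * N ^ (s - 1) = C s * (N * N ^ (s - 1)) * X ^ deltaS δ μ s := by
          rw [hWdef]; ring
      _ = C s * (D s ^ s * X ^ ((s : ℝ) * μ)) * X ^ deltaS δ μ s := by rw [hNr, hNs]
      _ = (C s * D s ^ s) * (X ^ deltaS δ μ s * X ^ ((s : ℝ) * μ)) := by ring
      _ = (C s * D s ^ s) * X ^ (deltaS δ μ s + (s : ℝ) * μ) := by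
          rw [← Real.rpow_add hX0]
      _ = (C s * D s ^ s) * X ^ deltaS δ μ (s + 1) := by rw [deltaS_succ]
  have hs_one : (1 : ℝ) ≤ (s : ℝ) ^ (s + 1) := by
    apply one_le_pow₀
    exact_mod_cast hs1
  have hWN0 : 0 ≤ W * N ^ (s - 1) := mul_nonneg hW0 (pow_nonneg hN0 _)
  have hfin : ‖z‖ ≤ (s : ℝ) ^ (s + 1) * (W * N ^ (s - 1)) := by
    set T : ℝ := (s : ℝ) ^ (s + 1) with hT
    set P : ℝ := W * N ^ (s - 1) with hP
    by_contra hcon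
    push_neg at hcon
    have h0 : 0 ≤ T * P := mul_nonneg (pow_nonneg (Nat.cast_nonneg s) _) hWN0
    have h1 : (T * P) * (T * P) < ‖z‖ * ‖z‖ := mul_self_lt_mul_self h0 hcon
    have h2 : ‖z‖ * ‖z‖ ≤ T * (P * P) := by
      rw [pow_two, pow_two] at hz2
      linarith [hz2]
    have h3 : T * (P * P) ≤ (T * (P * P)) * T :=
      le_mul_of_one_le_right (by positivity) hs_one
    have h4 : (T * P) * (T * P) = (T * (P * P)) * T := by ring
    linarith
  calc ‖z‖ ≤ (s : ℝ) ^ (s + 1) * (W * N ^ (s - 1)) := hfin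
    _ = ((s : ℝ) ^ (s + 1) * (C s * D s ^ s)) * X ^ deltaS δ μ (s + 1) := by
        rw [hWN]; ring


lemma chain_le {d : ℕ} {C : ℕ → ℝ} (hC : ∀ j : ℕ, 1 ≤ j → j < d → C j < C (j + 1)) :
    ∀ i j : ℕ, 1 ≤ i → i ≤ j → j ≤ d → C i ≤ C j := by
  intro i j hi hij hjd
  induction j with
  | zero => omega
  | succ n ih =>
    rcases Nat.lt_or_ge i (n + 1) with h | h
    · exact le_trans (ih (by omega) (by omega)) (le_of_lt (hC n (by omega) (by omega)))
    · have : i = n + 1 := by omega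
      subst this
      exact le_refl _


/-- Lemma `lemma.diametri` of the paper: for `R` large enough and a module
`M` of dimension `s ∈ {1,…,d−1}`, there is `C` such that every fast drift plane
`Π^{(s)}_M(a)`, `a ∈ 𝒵^{(s)}_M`, has diameter at most `C ‖a‖^{δ_{s+1}}`. -/
theorem fast_drift_plane_diameter (d : ℕ) (δ μ : ℝ) (C D : ℕ → ℝ)
    (hδ0 : 0 < δ) (hδ1 : δ < 1) (hμ : 0 < μ)
    (hμδ : ((d : ℝ) * ((d : ℝ) + 1) / 2) * μ < 1 - δ)
    (hC1 : C 1 = 1) (hD1 : D 1 = 1)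
    (hC : ∀ j : ℕ, 1 ≤ j → j < d → C j < C (j + 1))
    (hD : ∀ j : ℕ, 1 ≤ j → j < d → D j < D (j + 1))
    (s : ℕ) (hs1 : 1 ≤ s) (hsd : s < d)
    (M : Submodule ℤ (Fin d → ℤ)) (hM : IsZMod M) (hdim : dimM M = s) :
    ∃ R₀ : ℝ, 0 < R₀ ∧ ∀ R : ℝ, R₀ ≤ R →
      ∃ K : ℝ, 0 < K ∧ ∀ a ∈ zone δ μ C D R s M,
        ∀ x ∈ plane δ μ C D R s M a, ∀ y ∈ plane δ μ C D R s M a,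
          nrm (x - y) ≤ K * nrm a ^ deltaS δ μ (s + 1) := by
  -- monotonicity consequences
  have hCle : ∀ i j : ℕ, 1 ≤ i → i ≤ j → j ≤ d → C i ≤ C j := chain_le hC
  have hDle : ∀ i j : ℕ, 1 ≤ i → i ≤ j → j ≤ d → D i ≤ D j := chain_le hD
  have hC1le : ∀ j : ℕ, 1 ≤ j → j ≤ d → 1 ≤ C j := fun j h1 h2 => hC1 ▸ hCle 1 j le_rfl h1 h2
  have hD1le : ∀ j : ℕ, 1 ≤ j → j ≤ d → 1 ≤ D j := fun j h1 h2 => hD1 ▸ hDle 1 j le_rfl h1 h2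
  have hCsge : 1 ≤ C s := hC1le s hs1 (by omega)
  have hDsge : 1 ≤ D s := hD1le s hs1 (by omega)
  have hCs : ∀ j : Fin s, C ((j : ℕ) + 1) ≤ C s := fun j => hCle _ _ (by omega) (by omega) (by omega)
  have hDs : ∀ j : Fin s, D ((j : ℕ) + 1) ≤ D s := fun j => hDle _ _ (by omega) (by omega) (by omega)
  have hC0 : ∀ j : Fin s, 0 ≤ C ((j : ℕ) + 1) := fun j =>
    le_trans zero_le_one (hC1le _ (by omega) (by omega))
  -- constants
  set δ' := deltaS δ μ (s + 1) with hδ'def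
  have hsr : (0 : ℝ) ≤ (s : ℝ) := Nat.cast_nonneg s
  have hδ'0 : 0 < δ' := by
    rw [hδ'def, deltaS]
    push_cast
    nlinarith [mul_nonneg (mul_nonneg hsr hsr) hμ.le, mul_nonneg hsr hμ.le]
  have hδ'1 : δ' < 1 := by
    rw [hδ'def, deltaS]
    push_cast
    have hsd' : (s : ℝ) + 1 ≤ (d : ℝ) := by exact_mod_cast hsd
    have hd0 : (0 : ℝ) ≤ (d : ℝ) := Nat.cast_nonneg d
    have hprod : ((s : ℝ) + 1) * (s : ℝ) ≤ (d : ℝ) * ((d : ℝ) + 1) := by nlinarith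
    have hprod2 : ((s : ℝ) + 1) * (s : ℝ) * μ ≤ (d : ℝ) * ((d : ℝ) + 1) * μ :=
      mul_le_mul_of_nonneg_right hprod hμ.le
    nlinarith
  set K₀ : ℝ := (s : ℝ) ^ (s + 1) * (C s * D s ^ s) with hK₀def
  have hK₀1 : 1 ≤ K₀ := by
    rw [hK₀def]
    have h1 : (1 : ℝ) ≤ (s : ℝ) ^ (s + 1) := one_le_pow₀ (by exact_mod_cast hs1)
    have h2 : (1 : ℝ) ≤ D s ^ s := one_le_pow₀ hDsge
    have h3 : (1 : ℝ) ≤ C s * D s ^ s := by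
      nlinarith [mul_nonneg (sub_nonneg.mpr hCsge) (sub_nonneg.mpr h2)]
    nlinarith [mul_nonneg (sub_nonneg.mpr h1) (sub_nonneg.mpr h3)]
  have hK₀0 : 0 < K₀ := lt_of_lt_of_le one_pos hK₀1
  refine ⟨max 1 ((2 * K₀) ^ ((1 : ℝ) / (1 - δ'))), lt_of_lt_of_le one_pos (le_max_left _ _),
    fun R hRR₀ => ⟨6 * K₀, by linarith, ?_⟩⟩
  have hR1 : (1 : ℝ) ≤ R := le_trans (le_max_left _ _) hRR₀
  -- half bound
  have hhalf : ∀ t : ℝ, R ≤ t → K₀ * t ^ δ' ≤ t / 2 := by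
    intro t ht
    have ht1 : (1 : ℝ) ≤ t := le_trans hR1 ht
    have ht0 : (0 : ℝ) < t := lt_of_lt_of_le one_pos ht1
    have h2K : 2 * K₀ ≤ t ^ (1 - δ') := by
      have hbase : (2 * K₀) ^ ((1 : ℝ) / (1 - δ')) ≤ t :=
        le_trans (le_trans (le_max_right _ _) hRR₀) ht
      have h0 : (0 : ℝ) ≤ (2 * K₀) ^ ((1 : ℝ) / (1 - δ')) := Real.rpow_nonneg (by linarith) _
      have := Real.rpow_le_rpow h0 hbase (by linarith : (0:ℝ) ≤ 1 - δ')
      rwa [← Real.rpow_mul (by linarith : (0:ℝ) ≤ 2 * K₀),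
        one_div_mul_cancel (by linarith : (1:ℝ) - δ' ≠ 0), Real.rpow_one] at this
    have hδ'nn : (0 : ℝ) ≤ t ^ δ' := Real.rpow_nonneg ht0.le _
    calc K₀ * t ^ δ' ≤ (t ^ (1 - δ') / 2) * t ^ δ' := by
          apply mul_le_mul_of_nonneg_right _ hδ'nn
          linarith
      _ = t / 2 := by
          rw [div_mul_eq_mul_div, ← Real.rpow_add ht0]
          norm_num
  -- main argument
  intro a ha x hx y hy
  obtain ⟨hx1, hx2⟩ := hx
  obtain ⟨hy1, hy2⟩ := hy
  obtain ⟨qx, hqx, hxeq⟩ := hx1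
  obtain ⟨qy, hqy, hyeq⟩ := hy1
  have hza : R ≤ nrm a := by
    rw [zone, if_neg (by omega : ¬ s = 0)] at ha
    exact ha.1
  have hzx : R ≤ nrm x := by
    rw [zone, if_neg (by omega : ¬ s = 0)] at hx2
    exact hx2.1
  have hzy : R ≤ nrm y := by
    rw [zone, if_neg (by omega : ¬ s = 0)] at hy2
    exact hy2.1
  have key : ∀ u : Fin d → ℝ, u ∈ zone δ μ C D R s M → R ≤ nrm u →
      ‖((Submodule.orthogonalProjectionOnto (VM M)) (toE u) : EuclideanSpace ℝ (Fin d))‖ ≤ K₀ * nrm u ^ δ' :=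
    fun u hu hRu => zone_proj_bound δ μ C D R hμ hCs hDs hC0 hs1 M hdim u hu
      (le_trans hR1 hRu)
  have keyx := key x hx2 hzx
  have keya := key a ha hza
  have keyy := key y hy2 hzy
  -- projection identities
  have hproj : ∀ u v : Fin d → ℝ, u - v ∈ MrealSet M →
      toE u - toE v =
        ((Submodule.orthogonalProjectionOnto (VM M)) (toE u) : EuclideanSpace ℝ (Fin d)) -
        ((Submodule.orthogonalProjectionOnto (VM M)) (toE v) : EuclideanSpace ℝ (Fin d)) := by
    intro u v huv
    have hmem : toE (u - v) ∈ VM M := (mem_VM M _).mpr huv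
    have h1 : ((Submodule.orthogonalProjectionOnto (VM M)) (toE (u - v)) : EuclideanSpace ℝ (Fin d)) =
        toE (u - v) := Submodule.starProjection_eq_self_iff.mpr hmem
    have h2 : (Submodule.orthogonalProjectionOnto (VM M)) (toE (u - v)) =
        (Submodule.orthogonalProjectionOnto (VM M)) (toE u) - (Submodule.orthogonalProjectionOnto (VM M)) (toE v) := by
      rw [map_sub, map_sub]
    rw [← map_sub, ← h1, h2]
    push_cast
    ring
  -- norm comparisons
  have hxa : nrm x ≤ 3 * nrm a := by
    have hmem : x - a ∈ MrealSet M := by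
      have : x - a = qx := by rw [hxeq]; abel
      rw [this]; exact hqx
    have h1 : ‖toE x - toE a‖ ≤ nrm x / 2 + nrm a / 2 := by
      rw [hproj x a hmem]
      refine le_trans (norm_sub_le _ _) ?_
      exact add_le_add (le_trans keyx (hhalf _ hzx)) (le_trans keya (hhalf _ hza))
    have h2 : nrm x ≤ nrm a + ‖toE x - toE a‖ := by
      rw [← nrm_toE x, ← nrm_toE a]
      have := norm_sub_norm_le (toE x) (toE a)
      linarith [le_trans (le_abs_self _) (abs_norm_sub_norm_le (toE x) (toE a))]
    linarith
  have hya : nrm y ≤ 3 * nrm a := by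
    have hmem : y - a ∈ MrealSet M := by
      have : y - a = qy := by rw [hyeq]; abel
      rw [this]; exact hqy
    have h1 : ‖toE y - toE a‖ ≤ nrm y / 2 + nrm a / 2 := by
      rw [hproj y a hmem]
      refine le_trans (norm_sub_le _ _) ?_
      exact add_le_add (le_trans keyy (hhalf _ hzy)) (le_trans keya (hhalf _ hza))
    have h2 : nrm y ≤ nrm a + ‖toE y - toE a‖ := by
      rw [← nrm_toE y, ← nrm_toE a]
      linarith [le_trans (le_abs_self _) (abs_norm_sub_norm_le (toE y) (toE a))]
    linarith
  -- rpow comparisons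
  have ha0 : (0 : ℝ) < nrm a := lt_of_lt_of_le one_pos (le_trans hR1 hza)
  have hrp : ∀ u : Fin d → ℝ, nrm u ≤ 3 * nrm a → nrm u ^ δ' ≤ 3 * nrm a ^ δ' := by
    intro u hu
    calc nrm u ^ δ' ≤ (3 * nrm a) ^ δ' :=
          Real.rpow_le_rpow (nrm_nonneg u) hu hδ'0.le
      _ = 3 ^ δ' * nrm a ^ δ' := Real.mul_rpow (by norm_num) (nrm_nonneg a)
      _ ≤ 3 * nrm a ^ δ' := by
          refine mul_le_mul_of_nonneg_right ?_ (Real.rpow_nonneg (nrm_nonneg a) _)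
          calc (3 : ℝ) ^ δ' ≤ (3 : ℝ) ^ (1 : ℝ) :=
                Real.rpow_le_rpow_of_exponent_le (by norm_num) hδ'1.le
            _ = 3 := Real.rpow_one 3
  -- final estimate
  have hmemxy : x - y ∈ MrealSet M := by
    have : x - y = qx - qy := by rw [hxeq, hyeq]; abel
    rw [this]; exact sub_mem hqx hqy
  calc nrm (x - y) = ‖toE (x - y)‖ := (nrm_toE _).symm
    _ = ‖toE x - toE y‖ := by rw [map_sub]
    _ ≤ ‖((Submodule.orthogonalProjectionOnto (VM M)) (toE x) : EuclideanSpace ℝ (Fin d))‖ +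
        ‖((Submodule.orthogonalProjectionOnto (VM M)) (toE y) : EuclideanSpace ℝ (Fin d))‖ := by
        rw [hproj x y hmemxy]
        exact norm_sub_le _ _
    _ ≤ K₀ * nrm x ^ δ' + K₀ * nrm y ^ δ' := add_le_add keyx keyy
    _ ≤ K₀ * (3 * nrm a ^ δ') + K₀ * (3 * nrm a ^ δ') := by
        refine add_le_add (mul_le_mul_of_nonneg_left (hrp x hxa) hK₀0.le)
          (mul_le_mul_of_nonneg_left (hrp y hya) hK₀0.le)
    _ = 6 * K₀ * nrm a ^ δ' := by ring

end
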